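/- arXiv:1603.08862 — 6 statements merged into one kernel-verified Lean document; each statement's English description precedes it below -/
import Mathlib

section
/- For p ∈ (1, ∞) and any complex numbers z, w, the product (w - z) · conj(F_p(w) - F_p(z)) lies in the closed sector Σ_p = {ζ ∈ ℂ : ζ = 0 or |arg ζ| ≤ arcsin|1 - 2/p|}. -/
/-!
Put `a = ‖z‖`, `b = ‖w‖` and `w * conj z = X + iY`. The product equals
`a ^ p + b ^ p - (a ^ (p-2) + b ^ (p-2)) X + i (b ^ (p-2) - a ^ (p-2)) Y`, and `Σ_p` is the cone
`0 ≤ Re ζ`, `4 (p-1) (Im ζ)² ≤ (p-2)² (Re ζ)²`. As `X² + Y² = (ab)²`, Cauchy–Schwarz reduces both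
conditions to inequalities in `a, b` alone. Writing `a = exp (σ + d)`, `b = exp (σ - d)` these become
`cosh ((p-2) d) ≤ cosh (p d)` and `p |sinh ((p-2) d)| ≤ |p-2| |sinh (p d)|`; the latter holds
because `sinh` is convex on `[0, ∞)`.
-/

open Complex

noncomputable def Fp (p : ℝ) (z : ℂ) : ℂ :=
  if z = 0 then 0 else z * ((‖z‖ ^ (p - 2) : ℝ) : ℂ)

def Sector (φ : ℝ) : Set ℂ := {z : ℂ | z = 0 ∨ |z.arg| ≤ φ}

open ComplexConjugate

namespace Real

lemma sinh_mul_le_mul_sinh {c t : ℝ} (hc₀ : 0 ≤ c) (hc₁ : c ≤ 1) (ht : 0 ≤ t) :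
    sinh (c * t) ≤ c * sinh t := by
  have hderiv (x : ℝ) : HasDerivAt (fun y => c * sinh y - sinh (c * y))
      (c * cosh x - cosh (c * x) * (c * 1)) x :=
    ((hasDerivAt_sinh x).const_mul c).sub ((hasDerivAt_id x).const_mul c).sinh
  have hmono : Monotone (fun y => c * sinh y - sinh (c * y)) := by
    refine monotone_of_deriv_nonneg (fun x => (hderiv x).differentiableAt) fun x => ?_
    have hcosh : cosh (c * x) ≤ cosh x := by
      rw [cosh_le_cosh, abs_mul, abs_of_nonneg hc₀]
      exact mul_le_of_le_one_left (abs_nonneg x) hc₁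
    rw [(hderiv x).deriv]
    nlinarith
  simpa using hmono ht

lemma abs_sinh_mul_le {c : ℝ} (hc : |c| ≤ 1) (x : ℝ) : |sinh (c * x)| ≤ |c| * |sinh x| := by
  rw [abs_sinh, abs_sinh, abs_mul]
  exact sinh_mul_le_mul_sinh (abs_nonneg c) hc (abs_nonneg x)

lemma exp_rpow_add_exp_rpow (σ d u : ℝ) :
    exp (σ + d) ^ u + exp (σ - d) ^ u = 2 * exp (u * σ) * cosh (u * d) := by
  rw [← exp_mul, ← exp_mul, cosh_eq, mul_assoc, mul_div_assoc', mul_add, ← exp_add, ← exp_add]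
  ring_nf

lemma exp_rpow_sub_exp_rpow (σ d u : ℝ) :
    exp (σ + d) ^ u - exp (σ - d) ^ u = 2 * exp (u * σ) * sinh (u * d) := by
  rw [← exp_mul, ← exp_mul, sinh_eq, mul_assoc, mul_div_assoc', mul_sub, ← exp_add, ← exp_add]
  ring_nf

lemma exists_hyperbolic_param {a b : ℝ} (ha : 0 < a) (hb : 0 < b) (p : ℝ) :
    ∃ E > 0, ∃ d, a ^ p + b ^ p = 2 * E * cosh (p * d) ∧
      a * b * (a ^ (p - 2) + b ^ (p - 2)) = 2 * E * cosh ((p - 2) * d) ∧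
      a * b * (b ^ (p - 2) - a ^ (p - 2)) = -(2 * E * sinh ((p - 2) * d)) := by
  set σ := (log a + log b) / 2 with hσ
  set d := (log a - log b) / 2 with hd
  have ha' : a = exp (σ + d) := by rw [show σ + d = log a by rw [hσ, hd]; ring, exp_log ha]
  have hb' : b = exp (σ - d) := by rw [show σ - d = log b by rw [hσ, hd]; ring, exp_log hb]
  have hab : a * b = exp (2 * σ) := by rw [ha', hb', ← exp_add]; ring_nf
  have hE : exp (2 * σ) * exp ((p - 2) * σ) = exp (p * σ) := by rw [← exp_add]; ring_nf
  refine ⟨exp (p * σ), exp_pos _, d, ?_, ?_, ?_⟩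
  · rw [ha', hb', exp_rpow_add_exp_rpow]
  · rw [hab, ha', hb', exp_rpow_add_exp_rpow, ← hE]; ring
  · rw [hab, ← neg_sub, ha', hb', exp_rpow_sub_exp_rpow, ← hE]; ring

lemma mul_mul_rpow_add_rpow_le {a b p : ℝ} (ha : 0 ≤ a) (hb : 0 ≤ b) (hp : 1 ≤ p) :
    a * b * (a ^ (p - 2) + b ^ (p - 2)) ≤ a ^ p + b ^ p := by
  rcases ha.eq_or_lt with rfl | ha
  · simp [zero_rpow (by linarith : p ≠ 0)]; positivity
  rcases hb.eq_or_lt with rfl | hb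
  · simp [zero_rpow (by linarith : p ≠ 0)]; positivity
  obtain ⟨E, hE, d, hp', hq, -⟩ := exists_hyperbolic_param ha hb p
  rw [hp', hq]
  gcongr
  rw [cosh_le_cosh, abs_mul, abs_mul, abs_of_nonneg (by linarith : 0 ≤ p)]
  gcongr
  exact abs_le.mpr ⟨by linarith, by linarith⟩

lemma sq_mul_mul_rpow_add_rpow_le {a b p : ℝ} (ha : 0 ≤ a) (hb : 0 ≤ b) (hp : 1 ≤ p) :
    (p - 2) ^ 2 * (a * b * (a ^ (p - 2) + b ^ (p - 2))) ^ 2 +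
        4 * (p - 1) * (a * b * (b ^ (p - 2) - a ^ (p - 2))) ^ 2 ≤
      (p - 2) ^ 2 * (a ^ p + b ^ p) ^ 2 := by
  rcases ha.eq_or_lt with rfl | ha
  · simp [zero_rpow (by linarith : p ≠ 0)]; positivity
  rcases hb.eq_or_lt with rfl | hb
  · simp [zero_rpow (by linarith : p ≠ 0)]; positivity
  obtain ⟨E, -, d, hp', hq, hq'⟩ := exists_hyperbolic_param ha hb p
  have hp₀ : 0 < p := by linarith
  have hsinh : p * |sinh ((p - 2) * d)| ≤ |p - 2| * |sinh (p * d)| := by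
    have hc : |(p - 2) / p| ≤ 1 := by
      rw [abs_div, abs_of_pos hp₀, div_le_one hp₀]
      exact abs_le.mpr ⟨by linarith, by linarith⟩
    have h := abs_sinh_mul_le hc (p * d)
    rw [show (p - 2) / p * (p * d) = (p - 2) * d by field_simp, abs_div, abs_of_pos hp₀,
      div_mul_eq_mul_div, le_div_iff₀ hp₀] at h
    linarith
  have hsq : p ^ 2 * sinh ((p - 2) * d) ^ 2 ≤ (p - 2) ^ 2 * sinh (p * d) ^ 2 := by
    simpa only [mul_pow, sq_abs] using pow_le_pow_left₀ (by positivity) hsinh 2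
  rw [hp', hq, hq']
  calc _ = 4 * E ^ 2 * ((p - 2) ^ 2 + p ^ 2 * sinh ((p - 2) * d) ^ 2) := by
        linear_combination 4 * E ^ 2 * (p - 2) ^ 2 * cosh_sq ((p - 2) * d)
    _ ≤ 4 * E ^ 2 * ((p - 2) ^ 2 + (p - 2) ^ 2 * sinh (p * d) ^ 2) := by gcongr
    _ = _ := by linear_combination -(4 * E ^ 2 * (p - 2) ^ 2) * cosh_sq (p * d)

end Real

lemma mul_add_mul_le_of_sq_le {α β X Y γ : ℝ} (h : (α ^ 2 + β ^ 2) * (X ^ 2 + Y ^ 2) ≤ γ ^ 2)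
    (hγ : 0 ≤ γ) : α * X + β * Y ≤ γ := by
  refine le_of_abs_le (abs_le_of_sq_le_sq ?_ hγ)
  nlinarith [sq_nonneg (α * Y - β * X)]

lemma mem_sector_arcsin {ζ : ℂ} {m : ℝ} (hre : 0 ≤ ζ.re) (him : |ζ.im| ≤ m * ‖ζ‖) :
    ζ ∈ Sector (Real.arcsin m) := by
  rcases eq_or_ne ζ 0 with h | h
  · exact Or.inl h
  have hsin : |ζ.im / ‖ζ‖| ≤ m := by
    rwa [abs_div, abs_norm, div_le_iff₀ (norm_pos_iff.mpr h)]
  refine Or.inr (abs_le.mpr ⟨?_, ?_⟩) <;> rw [arg_of_re_nonneg hre]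
  · rw [← Real.arcsin_neg]
    exact Real.monotone_arcsin (neg_le_of_abs_le hsin)
  · exact Real.monotone_arcsin (le_of_abs_le hsin)

lemma mem_sector_arcsin_abs_one_sub_two_div {p : ℝ} (hp : 0 < p) {ζ : ℂ} (hre : 0 ≤ ζ.re)
    (him : 4 * (p - 1) * ζ.im ^ 2 ≤ (p - 2) ^ 2 * ζ.re ^ 2) :
    ζ ∈ Sector (Real.arcsin |1 - 2 / p|) := by
  refine mem_sector_arcsin hre (abs_le_of_sq_le_sq ?_ (by positivity))
  rw [mul_pow, sq_abs, Complex.sq_norm, normSq_apply, show 1 - 2 / p = (p - 2) / p by field_simp,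
    div_pow, div_mul_eq_mul_div, le_div_iff₀ (by positivity)]
  nlinarith

lemma Fp_eq_mul (p : ℝ) (z : ℂ) : Fp p z = z * (‖z‖ ^ (p - 2) : ℝ) := by
  unfold Fp
  split_ifs with h <;> simp [h]

lemma re_sub_mul_conj_Fp_sub {p : ℝ} (hp : p ≠ 0) (z w : ℂ) :
    ((w - z) * conj (Fp p w - Fp p z)).re =
      ‖z‖ ^ p + ‖w‖ ^ p - (‖z‖ ^ (p - 2) + ‖w‖ ^ (p - 2)) * (w * conj z).re := by
  have hpow (x : ℝ) (hx : 0 ≤ x) : x ^ p = x ^ 2 * x ^ (p - 2) := by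
    rw [← Real.rpow_natCast, ← Real.rpow_add' hx (by simpa)]
    norm_num
  rw [hpow _ (norm_nonneg z), hpow _ (norm_nonneg w), Fp_eq_mul, Fp_eq_mul, Complex.sq_norm,
    Complex.sq_norm]
  simp only [map_sub, map_mul, conj_ofReal, sub_re, mul_re, sub_im, mul_im, conj_re, conj_im,
    ofReal_re, ofReal_im, normSq_apply]
  ring

lemma im_sub_mul_conj_Fp_sub (p : ℝ) (z w : ℂ) :
    ((w - z) * conj (Fp p w - Fp p z)).im = (‖w‖ ^ (p - 2) - ‖z‖ ^ (p - 2)) * (w * conj z).im := by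
  simp only [Fp_eq_mul, map_sub, map_mul, conj_ofReal, sub_re, mul_re, sub_im, mul_im, conj_re,
    conj_im, ofReal_re, ofReal_im]
  ring

lemma re_sub_mul_conj_Fp_sub_nonneg {p : ℝ} (hp : 1 ≤ p) (z w : ℂ) :
    0 ≤ ((w - z) * conj (Fp p w - Fp p z)).re := by
  rw [re_sub_mul_conj_Fp_sub (by linarith)]
  have hX : (w * conj z).re ≤ ‖z‖ * ‖w‖ :=
    (re_le_norm _).trans_eq (by rw [norm_mul, norm_conj, mul_comm])
  have := mul_le_mul_of_nonneg_left hX (by positivity : 0 ≤ ‖z‖ ^ (p - 2) + ‖w‖ ^ (p - 2))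
  linarith [Real.mul_mul_rpow_add_rpow_le (norm_nonneg z) (norm_nonneg w) hp]

lemma four_mul_sub_one_mul_sq_im_le {p : ℝ} (hp : 1 ≤ p) (z w : ℂ) :
    4 * (p - 1) * ((w - z) * conj (Fp p w - Fp p z)).im ^ 2 ≤
      (p - 2) ^ 2 * ((w - z) * conj (Fp p w - Fp p z)).re ^ 2 := by
  have hXY : (w * conj z).re ^ 2 + (w * conj z).im ^ 2 = (‖z‖ * ‖w‖) ^ 2 := by
    rw [sq, sq, ← normSq_apply, ← Complex.sq_norm, norm_mul, norm_conj, mul_comm]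
  have hsq := Real.sq_mul_mul_rpow_add_rpow_le (norm_nonneg z) (norm_nonneg w) hp
  rw [re_sub_mul_conj_Fp_sub (by linarith), im_sub_mul_conj_Fp_sub]
  set a := ‖z‖; set b := ‖w‖; set A := a ^ (p - 2); set B := b ^ (p - 2)
  set X := (w * conj z).re; set Y := (w * conj z).im
  have hCS (β : ℝ) (hβ : β ^ 2 = 4 * (p - 1) * (B - A) ^ 2) :
      |p - 2| * (A + B) * X + β * Y ≤ |p - 2| * (a ^ p + b ^ p) :=
    mul_add_mul_le_of_sq_le (by rw [hXY, hβ]; simp only [mul_pow, sq_abs]; linear_combination hsq)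
      (by positivity)
  have hβ : (2 * √(p - 1) * (B - A)) ^ 2 = 4 * (p - 1) * (B - A) ^ 2 := by
    rw [mul_pow, mul_pow, Real.sq_sqrt (by linarith)]; ring
  have h₁ := hCS _ hβ
  have h₂ := hCS _ ((neg_sq _).trans hβ)
  calc 4 * (p - 1) * ((B - A) * Y) ^ 2 = (2 * √(p - 1) * (B - A) * Y) ^ 2 := by
        linear_combination -Y ^ 2 * hβ
    _ ≤ (|p - 2| * (a ^ p + b ^ p - (A + B) * X)) ^ 2 := sq_le_sq' (by linarith) (by linarith)
    _ = _ := by rw [mul_pow, sq_abs]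

theorem product_in_sector (p : ℝ) (hp : 1 < p) (z w : ℂ) :
    (w - z) * (starRingEnd ℂ) (Fp p w - Fp p z) ∈
      Sector (Real.arcsin |1 - 2 / p|) :=
  mem_sector_arcsin_abs_one_sub_two_div (by linarith) (re_sub_mul_conj_Fp_sub_nonneg hp.le z w)
    (four_mul_sub_one_mul_sq_im_le hp.le z w)
end

section
/- For p ∈ (1, ∞), the closure of the set {(w - z) · conj(F_p(w) - F_p(z)) : z, w ∈ ℂ} equals the sector Σ_p. -/
/-!
Put `u = z * conj w`. The pairing of `w - z` with `Fp p w - Fp p z` has real part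
`‖z‖ ^ p + ‖w‖ ^ p - Re u * (‖z‖ ^ (p - 2) + ‖w‖ ^ (p - 2))` and imaginary part
`Im u * (‖z‖ ^ (p - 2) - ‖w‖ ^ (p - 2))`. Optimising over the argument of `u` reduces the sector
condition `4 (p - 1) Im² ≤ (p - 2)² Re²` to an inequality in `‖z‖, ‖w‖` alone, which is the
monotonicity of `t ↦ sinh (t y) / t` in `|t|`.

Conversely, the pairing set is a cone, and its closure contains the directional derivatives
`u * conj (DFp(1) u) = 1 + (p - 2) Re u * u` for `‖u‖ = 1`. These fill the circle
`‖2 η - p‖ = |p - 2|`, and the cone over that circle is the sector of half-angle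
`arcsin |1 - 2 / p|`.
-/

open Complex

open ComplexConjugate

lemma mul_sinh_mul_le {p q y : ℝ} (hq : 0 ≤ q) (hqp : q ≤ p) (hy : 0 ≤ y) :
    p * Real.sinh (q * y) ≤ q * Real.sinh (p * y) := by
  refine hasSum_le (fun n => ?_) ((Real.hasSum_sinh _).mul_left p)
    ((Real.hasSum_sinh _).mul_left q)
  rw [mul_div_assoc', mul_div_assoc']
  gcongr ?_ / _
  have hpow : q ^ (2 * n) ≤ p ^ (2 * n) := pow_le_pow_left₀ hq hqp _
  have : 0 ≤ y ^ (2 * n + 1) := by positivity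
  rw [mul_pow, mul_pow, pow_succ q, pow_succ p]
  nlinarith [mul_le_mul_of_nonneg_left hpow (mul_nonneg hq (hq.trans hqp))]

lemma sq_mul_sinh_mul_le {p q : ℝ} (hqp : q ^ 2 ≤ p ^ 2) (y : ℝ) :
    p ^ 2 * Real.sinh (q * y) ^ 2 ≤ q ^ 2 * Real.sinh (p * y) ^ 2 := by
  have h := mul_sinh_mul_le (abs_nonneg q) (sq_le_sq.mp hqp) (abs_nonneg y)
  rw [← abs_mul, ← abs_mul, ← Real.abs_sinh, ← Real.abs_sinh] at h
  simpa only [mul_pow, sq_abs] using pow_le_pow_left₀ (by positivity) h 2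

/- With `a = exp (m + y)` and `b = exp (m - y)` the three bracketed quantities are
`2 exp (p m)` times `cosh ((p - 2) y)`, `sinh ((p - 2) y)` and `cosh (p y)`. -/
lemma rpow_two_point_bound {p a b : ℝ} (hp : 1 ≤ p) (ha : 0 ≤ a) (hb : 0 ≤ b) :
    (a * b) ^ 2 * ((p - 2) ^ 2 * (a ^ (p - 2) + b ^ (p - 2)) ^ 2
        + 4 * (p - 1) * (a ^ (p - 2) - b ^ (p - 2)) ^ 2)
      ≤ (p - 2) ^ 2 * (a ^ 2 * a ^ (p - 2) + b ^ 2 * b ^ (p - 2)) ^ 2 := by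
  rcases ha.eq_or_lt with rfl | ha
  · rw [zero_mul, zero_pow two_ne_zero, zero_mul]; positivity
  rcases hb.eq_or_lt with rfl | hb
  · rw [mul_zero, zero_pow two_ne_zero, zero_mul]; positivity
  obtain ⟨m, y, rfl, rfl⟩ : ∃ m y, a = Real.exp (m + y) ∧ b = Real.exp (m - y) :=
    ⟨(Real.log a + Real.log b) / 2, (Real.log a - Real.log b) / 2,
      by ring_nf; rw [Real.exp_log ha], by ring_nf; rw [Real.exp_log hb]⟩
  have hsub : Real.exp (m + y) * Real.exp (m - y) * (Real.exp (m + y) ^ (p - 2)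
      - Real.exp (m - y) ^ (p - 2)) = 2 * Real.exp (p * m) * Real.sinh ((p - 2) * y) := by
    simp only [← Real.exp_mul, Real.sinh_eq, mul_sub, ← Real.exp_add]
    ring_nf
    simp only [← Real.exp_add]
    ring_nf
  have hadd : Real.exp (m + y) * Real.exp (m - y) * (Real.exp (m + y) ^ (p - 2)
      + Real.exp (m - y) ^ (p - 2)) = 2 * Real.exp (p * m) * Real.cosh ((p - 2) * y) := by
    simp only [← Real.exp_mul, Real.cosh_eq, mul_add, ← Real.exp_add]
    ring_nf
    simp only [← Real.exp_add]
    ring_nf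
  have hrhs : Real.exp (m + y) ^ 2 * Real.exp (m + y) ^ (p - 2)
      + Real.exp (m - y) ^ 2 * Real.exp (m - y) ^ (p - 2)
        = 2 * Real.exp (p * m) * Real.cosh (p * y) := by
    simp only [← Real.exp_mul, Real.cosh_eq, ← Real.exp_nat_mul, ← Real.exp_add]
    ring_nf
    simp only [← Real.exp_add]
    ring_nf
  have hsinh := sq_mul_sinh_mul_le (q := p - 2) (p := p) (by nlinarith) y
  set a := Real.exp (m + y)
  set b := Real.exp (m - y)
  calc _ = (p - 2) ^ 2 * (a * b * (a ^ (p - 2) + b ^ (p - 2))) ^ 2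
        + 4 * (p - 1) * (a * b * (a ^ (p - 2) - b ^ (p - 2))) ^ 2 := by ring
    _ = 4 * Real.exp (p * m) ^ 2 * ((p - 2) ^ 2 * Real.cosh ((p - 2) * y) ^ 2
        + 4 * (p - 1) * Real.sinh ((p - 2) * y) ^ 2) := by rw [hsub, hadd]; ring
    _ ≤ 4 * Real.exp (p * m) ^ 2 * ((p - 2) ^ 2 * Real.cosh (p * y) ^ 2) := by
      gcongr
      rw [Real.cosh_sq, Real.cosh_sq]
      linarith
    _ = _ := by rw [hrhs]; ring

lemma sub_mul_rpow_sub_nonneg {r a b : ℝ} (hr : 0 ≤ r) (ha : 0 ≤ a) (hb : 0 ≤ b) :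
    0 ≤ (a - b) * (a ^ r - b ^ r) := by
  rcases le_total a b with h | h
  · exact mul_nonneg_of_nonpos_of_nonpos (by linarith)
      (by linarith [Real.rpow_le_rpow ha h hr])
  · exact mul_nonneg (by linarith) (by linarith [Real.rpow_le_rpow hb h hr])

lemma mul_sq_le_of_sq_add_sq_eq {Q K C D r X Y : ℝ} (hQ : 0 ≤ Q) (hK : 0 ≤ K)
    (hXY : X ^ 2 + Y ^ 2 = r ^ 2) (h : r ^ 2 * (Q * D ^ 2 + K) ≤ Q * C ^ 2) :
    K * Y ^ 2 ≤ Q * (C - X * D) ^ 2 := by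
  have key : (Q * D ^ 2 + K) * (Q * (C - X * D) ^ 2 - K * Y ^ 2)
      = ((Q * D ^ 2 + K) * X - Q * C * D) ^ 2 + K * (Q * C ^ 2 - r ^ 2 * (Q * D ^ 2 + K)) := by
    rw [← hXY]; ring
  rcases (by positivity : 0 ≤ Q * D ^ 2 + K).eq_or_lt with h0 | hpos
  · have hK0 : K = 0 := by nlinarith [mul_nonneg hQ (sq_nonneg D)]
    rw [hK0, zero_mul]; positivity
  · have : 0 ≤ (Q * D ^ 2 + K) * (Q * (C - X * D) ^ 2 - K * Y ^ 2) := by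
      rw [key]; have := sub_nonneg.mpr h; positivity
    exact sub_nonneg.mp ((mul_nonneg_iff_of_pos_left hpos).mp this)

lemma le_iff_nonneg_and_sq_le_sq {x y : ℝ} (hx : 0 ≤ x) : x ≤ y ↔ 0 ≤ y ∧ x ^ 2 ≤ y ^ 2 :=
  ⟨fun h => ⟨hx.trans h, pow_le_pow_left₀ hx h 2⟩,
    fun ⟨hy, h⟩ => (pow_le_pow_iff_left₀ hx hy two_ne_zero).mp h⟩

lemma mem_Sector_iff_norm_mul_cos_le {φ : ℝ} (hφ0 : 0 ≤ φ) (hφπ : φ ≤ Real.pi) (ζ : ℂ) :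
    ζ ∈ Sector φ ↔ ‖ζ‖ * Real.cos φ ≤ ζ.re := by
  rcases eq_or_ne ζ 0 with rfl | hζ
  · simp [Sector]
  have hcos : Real.cos |ζ.arg| = ζ.re / ‖ζ‖ := by rw [Real.cos_abs, cos_arg hζ]
  rw [Sector, Set.mem_ofPred_eq, or_iff_right hζ, ← mul_comm,
    ← le_div_iff₀ (norm_pos_iff.mpr hζ), ← hcos,
    Real.strictAntiOn_cos.le_iff_ge ⟨hφ0, hφπ⟩ ⟨abs_nonneg _, abs_arg_le_pi ζ⟩]

lemma mem_Sector_iff {p : ℝ} (hp : 1 < p) (ζ : ℂ) :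
    ζ ∈ Sector (Real.arcsin |1 - 2 / p|) ↔
      0 ≤ ζ.re ∧ 4 * (p - 1) * ζ.im ^ 2 ≤ (p - 2) ^ 2 * ζ.re ^ 2 := by
  have hp0 : 0 < p := by linarith
  have hcos_sq : Real.cos (Real.arcsin |1 - 2 / p|) ^ 2 = 4 * (p - 1) / p ^ 2 := by
    have h2p : 2 / p ≤ 2 := div_le_self two_pos.le hp.le
    have habs : |1 - 2 / p| ≤ 1 := abs_le.mpr ⟨by linarith, by linarith [div_pos two_pos hp0]⟩
    rw [Real.cos_arcsin, Real.sq_sqrt (sub_nonneg.mpr (pow_le_one₀ (abs_nonneg _) habs)),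
      sq_abs]
    field_simp; ring
  rw [mem_Sector_iff_norm_mul_cos_le (Real.arcsin_nonneg.mpr (abs_nonneg _))
      ((Real.arcsin_le_pi_div_two _).trans (by linarith [Real.pi_pos])),
    le_iff_nonneg_and_sq_le_sq (mul_nonneg (norm_nonneg _) (Real.cos_arcsin_nonneg _)),
    mul_pow, hcos_sq, Complex.sq_norm, normSq_apply, mul_div_assoc', div_le_iff₀ (by positivity)]
  constructor <;> rintro ⟨h0, h⟩ <;> exact ⟨h0, by nlinarith⟩

lemma Fp_eq_mul_rpow (p : ℝ) (z : ℂ) : Fp p z = z * ((‖z‖ ^ (p - 2) : ℝ) : ℂ) := by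
  rw [Fp]; split_ifs with hz <;> simp [hz]

lemma Fp_ofReal_mul (p : ℝ) {t : ℝ} (ht : 0 < t) (z : ℂ) :
    Fp p (t * z) = ((t ^ (p - 1) : ℝ) : ℂ) * Fp p z := by
  rw [Fp_eq_mul_rpow, Fp_eq_mul_rpow, norm_mul, norm_real, Real.norm_of_nonneg ht.le,
    Real.mul_rpow ht.le (norm_nonneg z), show p - 1 = (p - 2) + 1 by ring,
    Real.rpow_add_one ht.ne']
  push_cast; ring

lemma hasDerivAt_Fp_one_add_mul (p : ℝ) (u : ℂ) :
    HasDerivAt (fun ε : ℝ => Fp p (1 + ε * u)) (u + ((p - 2) * u.re : ℝ)) 0 := by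
  have hline : HasDerivAt (fun ε : ℝ => 1 + (ε : ℂ) * u) u 0 := by
    simpa using ((hasDerivAt_id (0 : ℝ)).ofReal_comp.mul_const u).const_add 1
  have hnorm : HasDerivAt (fun ε : ℝ => (‖1 + (ε : ℂ) * u‖ ^ 2) ^ ((p - 2) / 2))
      ((p - 2) * u.re) 0 := by
    convert hline.norm_sq.rpow_const (p := (p - 2) / 2) (Or.inl (by simp)) using 1
    simp [Complex.inner]; ring
  have hpow (x : ℂ) : (‖x‖ ^ 2) ^ ((p - 2) / 2) = ‖x‖ ^ (p - 2) := by
    rw [← Real.rpow_natCast, ← Real.rpow_mul (norm_nonneg x)]; ring_nf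
  simp only [hpow] at hnorm
  simp only [Fp_eq_mul_rpow]
  exact (hline.mul hnorm.ofReal_comp).congr_deriv (by simp)

def pairingSet (p : ℝ) : Set ℂ := {ζ : ℂ | ∃ z w : ℂ, ζ = (w - z) * conj (Fp p w - Fp p z)}

lemma re_pairing (p : ℝ) (z w : ℂ) : ((w - z) * conj (Fp p w - Fp p z)).re
    = ‖z‖ ^ 2 * ‖z‖ ^ (p - 2) + ‖w‖ ^ 2 * ‖w‖ ^ (p - 2)
      - (z * conj w).re * (‖z‖ ^ (p - 2) + ‖w‖ ^ (p - 2)) := by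
  simp only [Fp_eq_mul_rpow, map_sub, map_mul, conj_ofReal, mul_re, mul_im, sub_re, sub_im,
    conj_re, conj_im, ofReal_re, ofReal_im, Complex.sq_norm, normSq_apply]
  ring

lemma im_pairing (p : ℝ) (z w : ℂ) : ((w - z) * conj (Fp p w - Fp p z)).im
    = (z * conj w).im * (‖z‖ ^ (p - 2) - ‖w‖ ^ (p - 2)) := by
  simp only [Fp_eq_mul_rpow, map_sub, map_mul, conj_ofReal, mul_re, mul_im, sub_re, sub_im,
    conj_re, conj_im, ofReal_re, ofReal_im]
  ring

lemma pairing_mem_Sector {p : ℝ} (hp : 1 < p) (z w : ℂ) :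
    (w - z) * conj (Fp p w - Fp p z) ∈ Sector (Real.arcsin |1 - 2 / p|) := by
  rw [mem_Sector_iff hp, re_pairing, im_pairing]
  set u := z * conj w
  set A := ‖z‖ ^ (p - 2)
  set B := ‖w‖ ^ (p - 2)
  have hu : u.re ^ 2 + u.im ^ 2 = (‖z‖ * ‖w‖) ^ 2 := by
    rw [← norm_conj w, ← norm_mul, Complex.sq_norm, normSq_apply]; ring
  have hmul_rpow (x : ℂ) : ‖x‖ * ‖x‖ ^ (p - 2) = ‖x‖ ^ (p - 1) := by
    rw [← Real.rpow_one_add' (norm_nonneg x) (by linarith)]; ring_nf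
  constructor
  · have hu_re : u.re ≤ ‖z‖ * ‖w‖ := by
      simpa only [u, norm_mul, norm_conj] using re_le_norm u
    have hmono := sub_mul_rpow_sub_nonneg (r := p - 1) (by linarith) (norm_nonneg z)
      (norm_nonneg w)
    have hAB : 0 ≤ A + B := by positivity
    calc (0 : ℝ) ≤ (‖z‖ - ‖w‖) * (‖z‖ ^ (p - 1) - ‖w‖ ^ (p - 1))
          + (A + B) * (‖z‖ * ‖w‖ - u.re) := add_nonneg hmono (mul_nonneg hAB (by linarith))
      _ = _ := by rw [← hmul_rpow, ← hmul_rpow]; ring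
  · have := mul_sq_le_of_sq_add_sq_eq (K := 4 * (p - 1) * (A - B) ^ 2) (sq_nonneg (p - 2))
      (mul_nonneg (by linarith) (sq_nonneg _)) hu
      (rpow_two_point_bound hp.le (norm_nonneg z) (norm_nonneg w))
    linear_combination this

lemma ofReal_mul_mem_pairingSet {p r : ℝ} (hp : p ≠ 0) (hr : 0 < r) {ζ : ℂ}
    (hζ : ζ ∈ pairingSet p) : (r : ℂ) * ζ ∈ pairingSet p := by
  obtain ⟨z, w, rfl⟩ := hζ
  set t := r ^ p⁻¹
  have ht : 0 < t := Real.rpow_pos_of_pos hr _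
  have hr_eq : r = t * t ^ (p - 1) := by
    rw [← Real.rpow_one_add' ht.le (by simpa), add_sub_cancel, ← Real.rpow_mul hr.le,
      inv_mul_cancel₀ hp, Real.rpow_one]
  refine ⟨t * z, t * w, ?_⟩
  rw [Fp_ofReal_mul p ht, Fp_ofReal_mul p ht, ← mul_sub, ← mul_sub, map_mul, conj_ofReal, hr_eq]
  push_cast; ring

lemma ofReal_mul_mem_closure_pairingSet {p r : ℝ} (hp : p ≠ 0) (hr : 0 < r) {ζ : ℂ}
    (hζ : ζ ∈ closure (pairingSet p)) : (r : ℂ) * ζ ∈ closure (pairingSet p) :=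
  map_mem_closure (continuous_const_mul _) hζ fun _ => ofReal_mul_mem_pairingSet hp hr

/- `ε⁻² * ζ (1, 1 + ε u) = u * conj (slope of ε ↦ Fp p (1 + ε u))`, a positive multiple of a
point of the pairing set. -/
lemma mul_conj_mem_closure_pairingSet {p : ℝ} (hp : p ≠ 0) (u : ℂ) :
    u * conj (u + ((p - 2) * u.re : ℝ)) ∈ closure (pairingSet p) := by
  have hslope := hasDerivAt_iff_tendsto_slope.mp (hasDerivAt_Fp_one_add_mul p u)
  refine mem_closure_of_tendsto (((continuous_conj.tendsto _).comp hslope).const_mul u) ?_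
  filter_upwards [self_mem_nhdsWithin] with ε (hε : ε ≠ 0)
  have hε' : (ε : ℂ) ≠ 0 := ofReal_ne_zero.mpr hε
  have hscale : u * conj (slope (fun ε : ℝ => Fp p (1 + ε * u)) 0 ε)
      = ((ε ^ 2)⁻¹ : ℝ) * ((1 + ε * u - 1) * conj (Fp p (1 + ε * u) - Fp p 1)) := by
    rw [slope_def_module]
    simp only [sub_zero, ofReal_zero, zero_mul, add_zero, real_smul, map_mul, map_inv₀,
      conj_ofReal, ofReal_inv, ofReal_pow]
    field_simp
    ring
  rw [Function.comp_apply, hscale]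
  exact ofReal_mul_mem_pairingSet hp (by positivity) ⟨1, 1 + ε * u, rfl⟩

lemma mem_closure_pairingSet_of_norm_eq {p : ℝ} (hp : p ≠ 0) {η : ℂ}
    (hη : ‖2 * η - p‖ = |p - 2|) : η ∈ closure (pairingSet p) := by
  obtain ⟨v, hv1, hv⟩ : ∃ v : ℂ, ‖v‖ = 1 ∧ 2 * η - p = (p - 2) * v := by
    rcases eq_or_ne p 2 with rfl | h2
    · exact ⟨1, norm_one, by simpa using hη⟩
    have h2' : (p : ℂ) - 2 ≠ 0 := by exact_mod_cast sub_ne_zero.mpr h2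
    refine ⟨(2 * η - p) / (p - 2), ?_, by field_simp⟩
    rw [norm_div, hη, ← ofReal_ofNat, ← ofReal_sub, norm_real, Real.norm_eq_abs,
      div_self (abs_ne_zero.mpr (sub_ne_zero.mpr h2))]
  obtain ⟨u, rfl⟩ := IsAlgClosed.exists_pow_nat_eq v two_pos
  have hu : ‖u‖ = 1 := by
    rwa [norm_pow, pow_eq_one_iff_of_nonneg (norm_nonneg u) two_ne_zero] at hv1
  have hconj : u * conj u = 1 := by rw [mul_conj, normSq_eq_norm_sq, hu]; simp
  convert mul_conj_mem_closure_pairingSet hp u using 1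
  rw [map_add, conj_ofReal, ofReal_mul, re_eq_add_conj]
  push_cast
  linear_combination (1 / 2 : ℂ) * hv - (p / 2 : ℂ) * hconj

/- `s` is a root of `‖ζ‖² s² - p Re ζ s + (p - 1)`, whose discriminant is
`(p - 2)² Re² - 4 (p - 1) Im²`. -/
lemma exists_pos_norm_two_mul_sub_eq {p : ℝ} (hp : 1 < p) {ζ : ℂ} (hζ : ζ ≠ 0)
    (hre : 0 ≤ ζ.re) (him : 4 * (p - 1) * ζ.im ^ 2 ≤ (p - 2) ^ 2 * ζ.re ^ 2) :
    ∃ s : ℝ, 0 < s ∧ ‖2 * (s * ζ) - p‖ = |p - 2| := by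
  have hN : 0 < normSq ζ := normSq_pos.mpr hζ
  have hdisc : discrim (normSq ζ) (-(p * ζ.re)) (p - 1)
      = (p - 2) ^ 2 * ζ.re ^ 2 - 4 * (p - 1) * ζ.im ^ 2 := by
    rw [discrim, normSq_apply]; ring
  obtain ⟨s, hs⟩ := exists_quadratic_eq_zero hN.ne'
    ⟨_, hdisc.trans (Real.mul_self_sqrt (sub_nonneg.mpr him)).symm⟩
  have hs_pos : 0 < s := by
    by_contra! h
    nlinarith [mul_nonneg (mul_nonneg (by linarith : 0 ≤ p) hre) (neg_nonneg.mpr h)]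
  refine ⟨s, hs_pos, (sq_eq_sq₀ (norm_nonneg _) (abs_nonneg _)).mp ?_⟩
  rw [sq_abs, Complex.sq_norm, normSq_apply]
  rw [normSq_apply] at hs
  simp only [sub_re, sub_im, mul_re, mul_im, ofReal_re, ofReal_im, re_ofNat, im_ofNat]
  linear_combination 4 * hs

theorem closure_eq_sector (p : ℝ) (hp : 1 < p) :
    closure {ζ : ℂ | ∃ z w : ℂ, ζ = (w - z) * (starRingEnd ℂ) (Fp p w - Fp p z)} =
      Sector (Real.arcsin |1 - 2 / p|) := by
  have hp0 : p ≠ 0 := by positivity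
  change closure (pairingSet p) = _
  have hSector : Sector (Real.arcsin |1 - 2 / p|)
      = {ζ | 0 ≤ ζ.re ∧ 4 * (p - 1) * ζ.im ^ 2 ≤ (p - 2) ^ 2 * ζ.re ^ 2} :=
    Set.ext (mem_Sector_iff hp)
  refine Set.Subset.antisymm (closure_minimal ?_ ?_) fun ζ hζ => ?_
  · rintro _ ⟨z, w, rfl⟩
    exact pairing_mem_Sector hp z w
  · rw [hSector]
    exact (isClosed_le continuous_const continuous_re).inter
      (isClosed_le (continuous_const.mul (continuous_im.pow 2))
        (continuous_const.mul (continuous_re.pow 2)))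
  rcases eq_or_ne ζ 0 with rfl | hζ0
  · exact subset_closure ⟨0, 0, by simp⟩
  obtain ⟨hre, him⟩ := (mem_Sector_iff hp ζ).mp hζ
  obtain ⟨s, hs, hη⟩ := exists_pos_norm_two_mul_sub_eq hp hζ0 hre him
  have := ofReal_mul_mem_closure_pairingSet hp0 (inv_pos.mpr hs)
    (mem_closure_pairingSet_of_norm_eq hp0 hη)
  rwa [← mul_assoc, ← ofReal_mul, inv_mul_cancel₀ hs.ne', ofReal_one, one_mul] at this
end

section
/- Let A be a real symmetric 2×2 matrix with eigenvalues 1 and λ > 0. Then, identifying ℝ² with ℂ, the set {⟨h, A h⟩_ℂ : h ∈ ℂ} (where ⟨h, Ah⟩_ℂ := h · conj(Ah) computed via the identification) equals the sector Σ(arcsin(|λ - 1|/(λ + 1))). -/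
/-- Identification of `ℝ²` (as `Fin 2 → ℝ`) with `ℂ`. -/
noncomputable def toC (v : Fin 2 → ℝ) : ℂ := Complex.mk (v 0) (v 1)

def toV (h : ℂ) : Fin 2 → ℝ := ![h.re, h.im]

/-!
Writing `h = x + iy`, a real symmetric `A` acts on `ℂ` as `h ↦ (tr A / 2) h + ν h̄` with
`|ν|² = ((tr A)² - 4 det A) / 4 = ((λ - 1) / 2)²`, so `h · conj (A h) = (tr A / 2) |h|² + ν̄ h²`.
As `h = ρ e^{iθ}` runs over `ℂ` this is `ρ² ((1 + λ) / 2 + ν̄ e^{2iθ})`: the cone over the circle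
of centre `(1 + λ) / 2` and radius `|λ - 1| / 2`. That circle avoids `0`, and its tangents from `0`
make the angle `arcsin (|λ - 1| / (λ + 1))` with the real axis.
-/

open Complex Real Metric
open scoped Pointwise ComplexConjugate

lemma abs_arg_le_arcsin_iff {z : ℂ} (hz : z ≠ 0) {k : ℝ} (hk0 : 0 ≤ k) (hk1 : k < 1) :
    |z.arg| ≤ arcsin k ↔ 0 < z.re ∧ |z.im| ≤ k * ‖z‖ := by
  have hsin (hre : 0 < z.re) : |z.arg| ≤ arcsin k ↔ |z.im| ≤ k * ‖z‖ := by
    have hlt : |z.arg| < π / 2 := abs_arg_lt_pi_div_two_iff.mpr (Or.inl hre)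
    rw [le_arcsin_iff_sin_le ⟨by linarith [abs_nonneg z.arg, pi_pos], hlt.le⟩ ⟨by linarith, hk1.le⟩,
      ← abs_sin_eq_sin_abs_of_abs_le_pi (abs_arg_le_pi z), sin_arg, abs_div, abs_norm,
      div_le_iff₀ (norm_pos_iff.mpr hz)]
  have hre (h : |z.arg| ≤ arcsin k) : 0 < z.re :=
    (abs_arg_lt_pi_div_two_iff.mp (h.trans_lt (arcsin_lt_pi_div_two.mpr hk1))).resolve_right hz
  exact ⟨fun h => ⟨hre h, (hsin (hre h)).mp h⟩, fun ⟨hre, him⟩ => (hsin hre).mpr him⟩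

lemma mem_sector_arcsin_iff {z : ℂ} {k : ℝ} (hk0 : 0 ≤ k) (hk1 : k < 1) :
    z ∈ Sector (arcsin k) ↔ z = 0 ∨ (0 < z.re ∧ |z.im| ≤ k * ‖z‖) := by
  by_cases hz : z = 0
  · simp [Sector, hz]
  · simp only [Sector, Set.mem_ofPred_eq, hz, false_or, abs_arg_le_arcsin_iff hz hk0 hk1]

lemma re_pos_and_mul_abs_im_le_of_norm_sub_eq {s t : ℝ} {w : ℂ} (hts : t < s)
    (hw : ‖w - s‖ = t) : 0 < w.re ∧ s * |w.im| ≤ t * ‖w‖ := by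
  have ht : 0 ≤ t := hw ▸ norm_nonneg _
  have hs : 0 < s := ht.trans_lt hts
  have hw2 : (w.re - s) ^ 2 + w.im ^ 2 = t ^ 2 := by
    rw [← hw, Complex.sq_norm, normSq_apply]; simp only [sub_re, ofReal_re, sub_im, ofReal_im]; ring
  have hre : |w.re - s| ≤ t := abs_le_of_sq_le_sq (by nlinarith [sq_nonneg w.im]) ht
  refine ⟨by linarith [(abs_le.mp hre).1], ?_⟩
  rw [← sq_le_sq₀ (by positivity) (by positivity), mul_pow, mul_pow, sq_abs, Complex.sq_norm,
    normSq_apply]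
  have hsq : t ^ 2 * (w.re * w.re + w.im * w.im) - s ^ 2 * w.im ^ 2 =
      (s * w.re - (s ^ 2 - t ^ 2)) ^ 2 := by linear_combination (t ^ 2 - s ^ 2) * hw2
  linarith [sq_nonneg (s * w.re - (s ^ 2 - t ^ 2))]

lemma exists_pos_norm_mul_sub_eq {s t : ℝ} {z : ℂ} (ht : 0 ≤ t) (hts : t < s) (hre : 0 < z.re)
    (him : s * |z.im| ≤ t * ‖z‖) : ∃ ρ : ℝ, 0 < ρ ∧ ‖ρ * z - s‖ = t := by
  have hs : 0 < s := ht.trans_lt hts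
  have hN : 0 < normSq z := normSq_pos.mpr (fun h => by simp [h] at hre)
  have hD : 0 ≤ t ^ 2 * normSq z - s ^ 2 * z.im ^ 2 := by
    have := pow_le_pow_left₀ (by positivity) him 2
    rw [mul_pow, mul_pow, sq_abs, Complex.sq_norm] at this
    linarith
  obtain ⟨q, hq0, hq⟩ : ∃ q : ℝ, 0 ≤ q ∧ q ^ 2 = t ^ 2 * normSq z - s ^ 2 * z.im ^ 2 :=
    ⟨_, sqrt_nonneg _, sq_sqrt hD⟩
  -- `ρ` is the larger root of `‖ρ z - s‖² = t²`, a quadratic in `ρ` with discriminant `4 q²`.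
  refine ⟨(s * z.re + q) / normSq z, by positivity, ?_⟩
  rw [norm_def, ← sqrt_sq ht]
  congr 1
  simp only [normSq_apply] at hN hq ⊢
  simp only [sub_re, re_ofReal_mul, ofReal_re, sub_im, im_ofReal_mul, ofReal_im, sub_zero]
  field_simp
  linear_combination (z.re * z.re + z.im * z.im) * hq

lemma Ici_smul_sphere_eq_sector {s t : ℝ} (ht : 0 ≤ t) (hts : t < s) :
    Set.Ici (0 : ℝ) • sphere (s : ℂ) t = Sector (arcsin (t / s)) := by
  have hs : 0 < s := ht.trans_lt hts
  ext z
  rw [mem_sector_arcsin_iff (div_nonneg ht hs.le) ((div_lt_one hs).mpr hts), div_mul_eq_mul_div,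
    le_div_iff₀ hs, mul_comm |z.im|]
  simp only [Set.mem_smul, Set.mem_Ici, mem_sphere_iff_norm, real_smul]
  constructor
  · rintro ⟨r, hr, w, hw, rfl⟩
    rcases hr.eq_or_lt with rfl | hr
    · simp
    obtain ⟨hre, him⟩ := re_pos_and_mul_abs_im_le_of_norm_sub_eq hts hw
    refine Or.inr ⟨by simpa using mul_pos hr hre, ?_⟩
    simp only [im_ofReal_mul, norm_mul, norm_real, norm_of_nonneg hr.le, abs_mul, abs_of_pos hr]
    linarith [mul_le_mul_of_nonneg_left him hr.le]
  · rintro (rfl | ⟨hre, him⟩)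
    · exact ⟨0, le_rfl, s + t, by simp [abs_of_nonneg ht], by simp⟩
    · obtain ⟨ρ, hρ, hρz⟩ := exists_pos_norm_mul_sub_eq ht hts hre him
      refine ⟨ρ⁻¹, inv_nonneg.mpr hρ.le, ρ * z, hρz, ?_⟩
      rw [ofReal_inv, inv_mul_cancel_left₀ (ofReal_ne_zero.mpr hρ.ne')]

lemma exists_norm_eq_one_eq_add_mul {s m w : ℂ} (hw : ‖w - s‖ = ‖m‖) :
    ∃ u : ℂ, ‖u‖ = 1 ∧ w = s + m * u := by
  by_cases hm : m = 0
  · exact ⟨1, by simp, by simpa [hm, sub_eq_zero] using hw⟩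
  · exact ⟨(w - s) / m, by rw [norm_div, hw, div_self (norm_ne_zero_iff.mpr hm)],
      by field_simp; ring⟩

lemma exists_norm_eq_one_sq_eq (h : ℂ) : ∃ u : ℂ, ‖u‖ = 1 ∧ h ^ 2 = normSq h * u := by
  refine ⟨exp (arg h * I) ^ 2, by rw [norm_pow, norm_exp_ofReal_mul_I, one_pow], ?_⟩
  conv_lhs => rw [← norm_mul_exp_arg_mul_I h]
  rw [mul_pow, ← Complex.sq_norm, ofReal_pow]

lemma exists_mul_conj_eq_and_sq_eq {r : ℝ} (hr : 0 ≤ r) {u : ℂ} (hu : ‖u‖ = 1) :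
    ∃ h : ℂ, h * conj h = r ∧ h ^ 2 = r * u := by
  obtain ⟨v, hv⟩ := IsAlgClosed.exists_pow_nat_eq u two_pos
  have hv1 : ‖v‖ = 1 := by
    rw [← pow_left_inj₀ (norm_nonneg v) zero_le_one two_ne_zero, ← norm_pow, hv, hu, one_pow]
  refine ⟨√r * v, ?_, ?_⟩
  · rw [mul_conj, normSq_mul, normSq_ofReal, ← Complex.sq_norm v, hv1, mul_self_sqrt hr]
    simp
  · rw [mul_pow, hv, ← ofReal_pow, sq_sqrt hr]

lemma range_mul_mul_conj_add_mul_sq (s m : ℂ) :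
    Set.range (fun h : ℂ => s * (h * conj h) + m * h ^ 2) = Set.Ici (0 : ℝ) • sphere s ‖m‖ := by
  ext z
  simp only [Set.mem_range, Set.mem_smul, Set.mem_Ici, mem_sphere_iff_norm, real_smul]
  constructor
  · rintro ⟨h, rfl⟩
    obtain ⟨u, hu, hsq⟩ := exists_norm_eq_one_sq_eq h
    refine ⟨normSq h, normSq_nonneg h, s + m * u, by simp [hu], ?_⟩
    rw [mul_conj, hsq]
    ring
  · rintro ⟨r, hr, w, hw, rfl⟩
    obtain ⟨u, hu, rfl⟩ := exists_norm_eq_one_eq_add_mul hw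
    obtain ⟨h, hconj, hsq⟩ := exists_mul_conj_eq_and_sq_eq hr hu
    exact ⟨h, by rw [hconj, hsq]; ring⟩

noncomputable def conjCoeff (A : Matrix (Fin 2) (Fin 2) ℝ) : ℂ := ⟨(A 0 0 - A 1 1) / 2, A 0 1⟩

lemma toC_mulVec_toV {A : Matrix (Fin 2) (Fin 2) ℝ} (hA : A.IsSymm) (h : ℂ) :
    toC (A.mulVec (toV h)) = (A.trace / 2 : ℝ) * h + conjCoeff A * conj h := by
  have hb : A 1 0 = A 0 1 := hA.apply 0 1
  apply Complex.ext <;>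
    simp [toC, toV, conjCoeff, Matrix.mulVec, dotProduct, Matrix.trace_fin_two, hb] <;>
    ring

lemma normSq_conjCoeff {A : Matrix (Fin 2) (Fin 2) ℝ} (hA : A.IsSymm) :
    normSq (conjCoeff A) = (A.trace ^ 2 - 4 * A.det) / 4 := by
  rw [conjCoeff, normSq_mk, Matrix.trace_fin_two, Matrix.det_fin_two, hA.apply 0 1]
  ring

theorem numerical_range_symmetric_matrix (A : Matrix (Fin 2) (Fin 2) ℝ) (lam : ℝ)
    (hlam : 0 < lam) (hsymm : A.IsSymm)
    (htr : A.trace = 1 + lam) (hdet : A.det = lam) :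
    {ζ : ℂ | ∃ h : ℂ, ζ = h * (starRingEnd ℂ) (toC (A.mulVec (toV h)))} =
      Sector (Real.arcsin (|lam - 1| / (lam + 1))) := by
  have hform (h : ℂ) : h * conj (toC (A.mulVec (toV h))) =
      ((1 + lam) / 2 : ℝ) * (h * conj h) + conj (conjCoeff A) * h ^ 2 := by
    rw [toC_mulVec_toV hsymm, htr, map_add, map_mul, map_mul, conj_ofReal, conj_conj]
    ring
  have hset : {ζ : ℂ | ∃ h : ℂ, ζ = h * conj (toC (A.mulVec (toV h)))} =
      Set.range (fun h : ℂ => ((1 + lam) / 2 : ℝ) * (h * conj h) + conj (conjCoeff A) * h ^ 2) := by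
    ext ζ
    simp only [hform, Set.mem_ofPred_eq, Set.mem_range, eq_comm]
  have hnorm : ‖conj (conjCoeff A)‖ = |lam - 1| / 2 := by
    rw [Complex.norm_conj, norm_def, normSq_conjCoeff hsymm, htr, hdet,
      show ((1 + lam) ^ 2 - 4 * lam) / 4 = (|lam - 1| / 2) ^ 2 by rw [div_pow, sq_abs]; ring,
      sqrt_sq (by positivity)]
  have hgap : |lam - 1| / 2 < (1 + lam) / 2 := by
    have : |lam - 1| < 1 + lam := abs_sub_lt_iff.mpr ⟨by linarith, by linarith⟩
    linarith
  rw [hset, range_mul_mul_conj_add_mul_sq, hnorm, Ici_smul_sphere_eq_sector (by positivity) hgap]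
  congr 2
  field_simp
  ring
end

section
/- Let A = diag(1, λ) with λ > 0, and for x ∈ ℝ let h = (1, x) viewed as the complex number 1 + ix. Then sin(arg(h · conj(Ah))) = sin(arctan x + arctan(λ x)) · (1 - λ)/(1 + λ). -/
open Complex ComplexConjugate

lemma Complex.norm_one_add_mul_I (t : ℝ) : ‖1 + t * I‖ = √(1 + t ^ 2) := by
  simpa using norm_add_mul_I 1 t

lemma Complex.sin_arg_one_add_mul_I_mul_conj (a b : ℝ) :
    Real.sin (arg ((1 + a * I) * conj (1 + b * I))) = (a - b) / (√(1 + a ^ 2) * √(1 + b ^ 2)) := by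
  have him : ((1 + a * I) * conj (1 + b * I)).im = a - b := by
    simp only [mul_im, one_re, one_im, conj_re, conj_im, add_re, add_im, mul_re, ofReal_re,
      ofReal_im, I_re, I_im]
    ring
  rw [sin_arg, him, norm_mul, norm_conj, norm_one_add_mul_I, norm_one_add_mul_I]

lemma Real.sin_arctan_add_arctan (a b : ℝ) :
    Real.sin (arctan a + arctan b) = (a + b) / (√(1 + a ^ 2) * √(1 + b ^ 2)) := by
  rw [sin_add, sin_arctan, cos_arctan, sin_arctan, cos_arctan]
  field_simp

theorem sin_arg_formula (lam : ℝ) (hlam : 0 < lam) (x : ℝ) :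
    Real.sin (((1 + x * Complex.I) * (starRingEnd ℂ) (1 + (lam * x) * Complex.I)).arg) =
      Real.sin (Real.arctan x + Real.arctan (lam * x)) * (1 - lam) / (1 + lam) := by
  rw [← Complex.ofReal_mul, Complex.sin_arg_one_add_mul_I_mul_conj, Real.sin_arctan_add_arctan]
  have : 1 + lam ≠ 0 := by positivity
  field_simp
end

section
/- Let n ∈ ℕ, let (a_{jk}) be an n×n complex Hermitian matrix (a_{jk} = conj(a_{kj})), let p ∈ (1, ∞), and let c_1, …, c_n ∈ ℂ. Choose λ_{kj} ∈ ℂ with |λ_{kj}| = 1 and a_{kj} = λ_{kj}|a_{kj}|. Then Σ_{j,k} (c_j·conj(F_p(c_j))·|a_{kj}| − c_j·conj(F_p(c_k))·a_{kj}) = (1/2)·Σ_{j,k} |a_{kj}|·(λ_{kj}c_j − c_k)·conj(F_p(λ_{kj}c_j) − F_p(c_k)), and this quantity lies in the sector Σ_p. -/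
/-!
Write `ζ(z, w) = (z - w) · conj (F_p z - F_p w)`. Hermitian symmetry and `F_p (λ z) = λ F_p z`
pair the `(j, k)` and `(k, j)` terms of the sum into `|a_{kj}| ζ(λ_{kj} c_j, c_k)`, which gives the
identity. Every `ζ(z, w)` lies in the convex cone `2 √(p - 1) |Im ζ| ≤ |p - 2| Re ζ`: by
Cauchy–Schwarz in the coordinates of `z · conj w` this reduces to the radial inequality
`p |r^(p-2) - s^(p-2)| r s ≤ |p - 2| |r^p - s^p|`, which in logarithmic coordinates says that
`sinh (a v) / a` increases with `a > 0`, by convexity of `sinh` on `[0, ∞)`. As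
`(p - 2)² + 4 (p - 1) = p²`, that cone lies in the sector of half-angle `arcsin |1 - 2 / p|`.
-/

open Complex

open ComplexConjugate

namespace Real

theorem convexOn_sinh : ConvexOn ℝ (Set.Ici 0) sinh := by
  refine MonotoneOn.convexOn_of_deriv (convex_Ici 0) continuous_sinh.continuousOn
    differentiable_sinh.differentiableOn ?_
  rw [deriv_sinh, interior_Ici]
  intro x hx y hy hxy
  rw [cosh_le_cosh, abs_of_pos hx, abs_of_pos hy]
  exact hxy

theorem sinh_mul_le_mul_sinh_s14 {t x : ℝ} (ht₀ : 0 ≤ t) (ht₁ : t ≤ 1) (hx : 0 ≤ x) :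
    sinh (t * x) ≤ t * sinh x := by
  simpa using convexOn_sinh.2 (Set.mem_Ici.2 hx) Set.self_mem_Ici ht₀ (sub_nonneg.2 ht₁)
    (add_sub_cancel t 1)

theorem mul_abs_sinh_le {a b : ℝ} (hab : |a| ≤ b) (v : ℝ) :
    b * |sinh (a * v)| ≤ |a| * |sinh (b * v)| := by
  rcases (abs_nonneg a).trans hab |>.eq_or_lt with rfl | hb
  · simp [abs_nonpos_iff.1 hab]
  have key := sinh_mul_le_mul_sinh_s14 (div_nonneg (abs_nonneg a) hb.le) ((div_le_one hb).2 hab)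
    (mul_nonneg hb.le (abs_nonneg v))
  rw [← mul_assoc, div_mul_cancel₀ _ hb.ne', div_mul_eq_mul_div, le_div_iff₀ hb] at key
  rw [abs_sinh, abs_sinh, abs_mul, abs_mul, abs_of_pos hb, mul_comm b]
  exact key

theorem exp_add_sub_exp_sub (m t : ℝ) : exp (m + t) - exp (m - t) = 2 * exp m * sinh t := by
  rw [sinh_eq, exp_add, exp_sub, exp_neg]
  ring

theorem mul_abs_rpow_sub_rpow_mul_le {p r s : ℝ} (hp : 1 ≤ p) (hr : 0 ≤ r) (hs : 0 ≤ s) :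
    p * |r ^ (p - 2) - s ^ (p - 2)| * (r * s) ≤ |p - 2| * |r ^ p - s ^ p| := by
  rcases hr.eq_or_lt with rfl | hr
  · simp only [zero_mul, mul_zero]; positivity
  rcases hs.eq_or_lt with rfl | hs
  · simp only [mul_zero]; positivity
  obtain ⟨x, rfl⟩ : ∃ x, exp x = r := ⟨log r, exp_log hr⟩
  obtain ⟨y, rfl⟩ : ∃ y, exp y = s := ⟨log s, exp_log hs⟩
  set m := p * (x + y) / 2
  set d := (x - y) / 2
  have hleft : (exp x ^ (p - 2) - exp y ^ (p - 2)) * (exp x * exp y)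
      = 2 * exp m * sinh ((p - 2) * d) := by
    rw [← exp_add_sub_exp_sub, ← exp_mul, ← exp_mul, sub_mul, ← exp_add, ← exp_add, ← exp_add]
    congr 2 <;> ring
  have hright : exp x ^ p - exp y ^ p = 2 * exp m * sinh (p * d) := by
    rw [← exp_add_sub_exp_sub, ← exp_mul, ← exp_mul]
    congr 2 <;> ring
  have hsinh := mul_abs_sinh_le (a := p - 2) (b := p) (abs_le.2 ⟨by linarith, by linarith⟩) d
  have hpos : 0 < 2 * exp m := by positivity
  calc p * |exp x ^ (p - 2) - exp y ^ (p - 2)| * (exp x * exp y)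
      = 2 * exp m * (p * |sinh ((p - 2) * d)|) := by
        rw [mul_assoc, ← abs_of_pos (mul_pos (exp_pos x) (exp_pos y)), ← abs_mul, hleft,
          abs_mul, abs_of_pos hpos]
        ring
    _ ≤ 2 * exp m * (|p - 2| * |sinh (p * d)|) := by gcongr
    _ = |p - 2| * |exp x ^ p - exp y ^ p| := by
        rw [hright, abs_mul, abs_of_pos hpos]
        ring

theorem monotoneOn_rpow_sub_two_mul_self {p : ℝ} (hp : 1 ≤ p) :
    MonotoneOn (fun r : ℝ => r ^ (p - 2) * r) (Set.Ici 0) := by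
  intro s hs r hr hsr
  rcases (Set.mem_Ici.1 hs).eq_or_lt with rfl | hs
  · simp only [mul_zero]
    exact mul_nonneg (rpow_nonneg hr _) hr
  simp only [← rpow_add_one (hs.ne'), ← rpow_add_one (hs.trans_le hsr).ne']
  exact rpow_le_rpow hs.le hsr (by linarith)

end Real

open Real

theorem Finset.sum_sum_add_swap {ι R : Type*} [Fintype ι] [Semiring R] (f : ι → ι → R) :
    ∑ j, ∑ k, (f j k + f k j) = 2 * ∑ j, ∑ k, f j k := by
  simp only [Finset.sum_add_distrib]
  rw [Finset.sum_comm (f := fun j k => f k j), two_mul]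

theorem Fp_eq_ofReal_mul (p : ℝ) (z : ℂ) : Fp p z = ((‖z‖ ^ (p - 2) : ℝ) : ℂ) * z := by
  unfold Fp
  split_ifs with h
  · simp [h]
  · exact mul_comm _ _

theorem Fp_mul_of_norm_eq_one (p : ℝ) {l : ℂ} (hl : ‖l‖ = 1) (z : ℂ) :
    Fp p (l * z) = l * Fp p z := by
  rw [Fp_eq_ofReal_mul, Fp_eq_ofReal_mul, norm_mul, hl, one_mul]
  ring

theorem mem_Sector_arcsin {ζ : ℂ} {σ : ℝ} (hre : 0 ≤ ζ.re) (him : |ζ.im| ≤ σ * ‖ζ‖) :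
    ζ ∈ Sector (arcsin σ) := by
  rcases eq_or_ne ζ 0 with hζ | hζ
  · exact Or.inl hζ
  have hy : |ζ.im / ‖ζ‖| ≤ σ := by
    rwa [abs_div, abs_norm, div_le_iff₀ (norm_pos_iff.2 hζ)]
  refine Or.inr (abs_le.2 ⟨?_, ?_⟩) <;> rw [arg_of_re_nonneg hre]
  · rw [← arcsin_neg]
    exact arcsin_le_arcsin (neg_le_of_abs_le hy)
  · exact arcsin_le_arcsin (le_of_abs_le hy)

/-- For `0 < a` this is the closed sector `|arg ζ| ≤ arctan (b / a)`; the linear description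
makes it closed under addition, unlike `Sector`. -/
def sectorCone (a b : ℝ) : AddSubmonoid ℂ where
  carrier := {ζ | 0 ≤ ζ.re ∧ |a * ζ.im| ≤ b * ζ.re}
  add_mem' := by
    rintro ζ η ⟨hζ, hζ'⟩ ⟨hη, hη'⟩
    refine ⟨by simp only [add_re]; linarith, ?_⟩
    simp only [add_re, add_im, mul_add]
    exact (abs_add_le _ _).trans (by linarith)
  zero_mem' := by simp

theorem mem_sectorCone {a b : ℝ} {ζ : ℂ} :
    ζ ∈ sectorCone a b ↔ 0 ≤ ζ.re ∧ |a * ζ.im| ≤ b * ζ.re :=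
  Iff.rfl

theorem ofReal_mul_mem_sectorCone {a b t : ℝ} (ht : 0 ≤ t) {ζ : ℂ} (hζ : ζ ∈ sectorCone a b) :
    (t : ℂ) * ζ ∈ sectorCone a b := by
  obtain ⟨hre, him⟩ := hζ
  rw [mem_sectorCone, re_ofReal_mul, im_ofReal_mul, mul_left_comm, abs_mul, abs_of_nonneg ht,
    mul_left_comm]
  exact ⟨mul_nonneg ht hre, mul_le_mul_of_nonneg_left him ht⟩

theorem sub_mul_conj_sub_mem_sectorCone {z w : ℂ} {A B P Q p : ℝ} (hA : 0 ≤ A) (hB : 0 ≤ B)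
    (hp : 0 ≤ p) (hP : 0 ≤ P) (hPQ : P ^ 2 + Q ^ 2 = p ^ 2)
    (hmono : 0 ≤ (A * ‖z‖ - B * ‖w‖) * (‖z‖ - ‖w‖))
    (hrad : p * |A - B| * (‖z‖ * ‖w‖) ≤ P * |A * ‖z‖ ^ 2 - B * ‖w‖ ^ 2|) :
    (z - w) * conj ((A : ℂ) * z - B * w) ∈ sectorCone Q P := by
  set X := (z * conj w).re
  set Y := (z * conj w).im
  have hζ : (z - w) * conj ((A : ℂ) * z - B * w)
      = ((A * ‖z‖ ^ 2 + B * ‖w‖ ^ 2 : ℝ) : ℂ) - A * conj (z * conj w) - B * (z * conj w) := by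
    simp only [map_sub, map_mul, conj_ofReal, conj_conj]
    push_cast
    linear_combination (A : ℂ) * mul_conj' z + (B : ℂ) * mul_conj' w
  have hre : ((z - w) * conj ((A : ℂ) * z - B * w)).re
      = A * ‖z‖ ^ 2 + B * ‖w‖ ^ 2 - (A + B) * X := by
    simp only [hζ, sub_re, ofReal_re, re_ofReal_mul, conj_re]
    ring
  have him : ((z - w) * conj ((A : ℂ) * z - B * w)).im = (A - B) * Y := by
    simp only [hζ, sub_im, ofReal_im, im_ofReal_mul, conj_im]
    ring
  have hXY : X ^ 2 + Y ^ 2 = (‖z‖ * ‖w‖) ^ 2 := by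
    rw [← norm_conj w, ← norm_mul, ← normSq_eq_norm_sq, normSq_apply]
    ring
  have hX : X ≤ ‖z‖ * ‖w‖ := by
    rw [← norm_conj w, ← norm_mul]
    exact re_le_norm _
  rw [mem_sectorCone, hre, him]
  constructor
  · nlinarith [mul_le_mul_of_nonneg_left hX (add_nonneg hA hB)]
  set r := ‖z‖
  set s := ‖w‖
  have hrad2 : (p * (A - B) * (r * s)) ^ 2 ≤ (P * (A * r ^ 2 - B * s ^ 2)) ^ 2 := by
    simpa only [mul_pow, sq_abs] using pow_le_pow_left₀ (by positivity) hrad 2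
  have hCS : (|Q * ((A - B) * Y)| + P * (A + B) * X) ^ 2
      ≤ (Q ^ 2 * (A - B) ^ 2 + P ^ 2 * (A + B) ^ 2) * (X ^ 2 + Y ^ 2) := by
    rw [← mul_assoc, abs_mul, ← sq_abs Y, ← mul_pow, ← sq_abs (Q * (A - B))]
    nlinarith [sq_nonneg (|Q * (A - B)| * X - P * (A + B) * |Y|)]
  -- as `Q² = p² - P²`, the right-hand sides of `hCS` and `hsq` are the two sides of `hrad2`
  -- plus `4 P² A B (r s)²`
  have hsq : (|Q * ((A - B) * Y)| + P * (A + B) * X) ^ 2 ≤ (P * (A * r ^ 2 + B * s ^ 2)) ^ 2 := by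
    rw [hXY] at hCS
    linear_combination hCS + hrad2 + ((A - B) * (r * s)) ^ 2 * hPQ
  have hlin := le_of_sq_le_sq hsq (by positivity)
  linarith

theorem sub_mul_conj_Fp_sub_mem_sectorCone {p : ℝ} (hp : 1 ≤ p) (z w : ℂ) :
    (z - w) * conj (Fp p z - Fp p w) ∈ sectorCone (2 * √(p - 1)) |p - 2| := by
  have hpow (r : ℝ) (hr : 0 ≤ r) : r ^ (p - 2) * r ^ 2 = r ^ p := by
    rw [← rpow_natCast, ← rpow_add' hr (by norm_num; linarith)]
    norm_num
  rw [Fp_eq_ofReal_mul, Fp_eq_ofReal_mul]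
  refine sub_mul_conj_sub_mem_sectorCone (rpow_nonneg (norm_nonneg z) _)
    (rpow_nonneg (norm_nonneg w) _) (by linarith) (abs_nonneg _) ?_ ?_ ?_
  · rw [sq_abs, mul_pow, sq_sqrt (by linarith)]
    ring
  · exact (monovaryOn_id_iff.2 (monotoneOn_rpow_sub_two_mul_self hp)).sub_mul_sub_nonneg
      (norm_nonneg w) (norm_nonneg z)
  · rw [hpow _ (norm_nonneg z), hpow _ (norm_nonneg w)]
    exact mul_abs_rpow_sub_rpow_mul_le hp (norm_nonneg z) (norm_nonneg w)

theorem sectorCone_subset_Sector {p : ℝ} (hp : 1 ≤ p) :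
    (sectorCone (2 * √(p - 1)) |p - 2| : Set ℂ) ⊆ Sector (arcsin |1 - 2 / p|) := by
  rintro ζ ⟨hre, him⟩
  refine mem_Sector_arcsin hre ?_
  have hp₀ : 0 < p := by linarith
  rw [show 1 - 2 / p = (p - 2) / p by field_simp, abs_div, abs_of_pos hp₀, div_mul_eq_mul_div,
    le_div_iff₀ hp₀]
  have him2 := pow_le_pow_left₀ (abs_nonneg _) him 2
  rw [sq_abs, mul_pow, mul_pow, sq_sqrt (by linarith)] at him2
  refine le_of_sq_le_sq ?_ (by positivity)
  rw [mul_pow, mul_pow, sq_abs, Complex.sq_norm, normSq_apply]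
  nlinarith [sq_abs (p - 2)]

theorem sum_sub_eq_half_sum_symmetrized {ι : Type*} [Fintype ι] (F : ℂ → ℂ)
    (hF : ∀ l z, ‖l‖ = 1 → F (l * z) = l * F z) (a lam : ι → ι → ℂ) (c : ι → ℂ)
    (hherm : ∀ j k, a j k = conj (a k j)) (hlam_abs : ∀ k j, ‖lam k j‖ = 1)
    (hlam : ∀ k j, a k j = lam k j * ((‖a k j‖ : ℝ) : ℂ)) :
    ∑ j, ∑ k, (c j * conj (F (c j)) * ((‖a k j‖ : ℝ) : ℂ) - c j * conj (F (c k)) * a k j)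
      = (1 / 2 : ℂ) * ∑ j, ∑ k, ((‖a k j‖ : ℝ) : ℂ) * (lam k j * c j - c k)
          * conj (F (lam k j * c j) - F (c k)) := by
  have hterm (j k : ι) : ((‖a k j‖ : ℝ) : ℂ) * (lam k j * c j - c k)
        * conj (F (lam k j * c j) - F (c k))
      = (c j * conj (F (c j)) * ((‖a k j‖ : ℝ) : ℂ) - c j * conj (F (c k)) * a k j)
        + (c k * conj (F (c k)) * ((‖a j k‖ : ℝ) : ℂ) - c k * conj (F (c j)) * a j k) := by
    have hunit : conj (lam k j) * lam k j = 1 := by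
      rw [conj_mul', hlam_abs]
      norm_num
    have hjk : a j k = conj (lam k j) * ((‖a k j‖ : ℝ) : ℂ) := by
      rw [hherm, ← conj_ofReal, ← map_mul, ← hlam]
    have hnorm : ‖a j k‖ = ‖a k j‖ := by rw [hherm, norm_conj]
    rw [hF _ _ (hlam_abs k j), hnorm, hjk, map_sub, map_mul]
    linear_combination (((‖a k j‖ : ℝ) : ℂ) * c j * conj (F (c j))) * hunit
      + (c j * conj (F (c k))) * hlam k j
  simp_rw [hterm, Finset.sum_sum_add_swap]
  ring

theorem symmetrized_sum_in_sector (n : ℕ) (p : ℝ) (hp : 1 < p)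
    (a lam : Fin n → Fin n → ℂ) (c : Fin n → ℂ)
    (hherm : ∀ j k, a j k = (starRingEnd ℂ) (a k j))
    (hlam_abs : ∀ k j, ‖lam k j‖ = 1)
    (hlam : ∀ k j, a k j = lam k j * ((‖a k j‖ : ℝ) : ℂ)) :
    (∑ j, ∑ k, (c j * (starRingEnd ℂ) (Fp p (c j)) * ((‖a k j‖ : ℝ) : ℂ)
        - c j * (starRingEnd ℂ) (Fp p (c k)) * a k j)
      = (1 / 2 : ℂ) * ∑ j, ∑ k, ((‖a k j‖ : ℝ) : ℂ)
          * (lam k j * c j - c k)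
          * (starRingEnd ℂ) (Fp p (lam k j * c j) - Fp p (c k))) ∧
    (∑ j, ∑ k, (c j * (starRingEnd ℂ) (Fp p (c j)) * ((‖a k j‖ : ℝ) : ℂ)
        - c j * (starRingEnd ℂ) (Fp p (c k)) * a k j)) ∈
      Sector (Real.arcsin |1 - 2 / p|) := by
  have hid := sum_sub_eq_half_sum_symmetrized (Fp p) (fun l z hl => Fp_mul_of_norm_eq_one p hl z)
    a lam c hherm hlam_abs hlam
  refine ⟨hid, sectorCone_subset_Sector hp.le ?_⟩
  have hsum : ∑ j, ∑ k, ((‖a k j‖ : ℝ) : ℂ) * (lam k j * c j - c k)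
      * conj (Fp p (lam k j * c j) - Fp p (c k)) ∈ sectorCone (2 * √(p - 1)) |p - 2| :=
    sum_mem fun j _ => sum_mem fun k _ => by
      rw [mul_assoc]
      exact ofReal_mul_mem_sectorCone (norm_nonneg _) (sub_mul_conj_Fp_sub_mem_sectorCone hp.le _ _)
  rw [hid, show (1 / 2 : ℂ) = ((1 / 2 : ℝ) : ℂ) by norm_num]
  exact ofReal_mul_mem_sectorCone (by norm_num) hsum
end

section
/- Let p ∈ (1, ∞). If f_n → f in L^p (complex-valued, on a σ-finite measure space), then F_p ∘ f_n → F_p ∘ f in L^{p'}, where p' is the conjugate exponent; i.e., the map f ↦ F_p ∘ f is continuous from L^p to L^{p'}. -/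
open MeasureTheory Filter

/-!
For `‖w‖ ≤ ‖z‖` put `u = (‖w‖ / ‖z‖) • z`. Along the ray of `z` the map `Fp p` acts on lengths
by `t ↦ t ^ (p - 1)`, and on the sphere of radius `‖w‖` it is multiplication by `‖w‖ ^ (p - 2)`.
Splitting `Fp p z - Fp p w` through `Fp p u` gives `‖Fp p z - Fp p w‖ ≤ 3 ‖z - w‖ ^ (p - 1)` for
`p ≤ 2` and `‖Fp p z - Fp p w‖ ≤ (p + 1) (‖z‖ + ‖w‖) ^ (p - 2) ‖z - w‖` for `p ≥ 2`.
In the first case this integrates to `‖Fp p ∘ g - Fp p ∘ f‖_p' ≤ 3 ‖g - f‖_p ^ (p - 1)`; in the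
second, Hölder's inequality for the exponents `p / (p - 2)`, `p` and `p'` gives
`‖Fp p ∘ g - Fp p ∘ f‖_p' ≤ (p + 1) (‖g‖_p + ‖f‖_p) ^ (p - 2) ‖g - f‖_p`.
-/

lemma rpow_sub_rpow_le_mul_sub {α r s : ℝ} (hα : 1 ≤ α) (hs : 0 ≤ s) (hsr : s ≤ r) :
    r ^ α - s ^ α ≤ α * r ^ (α - 1) * (r - s) := by
  rcases hsr.eq_or_lt with rfl | hlt
  · simp
  have h := (convexOn_rpow hα).slope_le_of_hasDerivAt hs (hs.trans hlt.le) hlt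
    (Real.hasDerivAt_rpow_const (Or.inr hα))
  rwa [slope_def_field, div_le_iff₀ (sub_pos.2 hlt)] at h

lemma le_rpow_mul_rpow_of_le_of_le {e a b θ : ℝ} (he : 0 ≤ e) (hea : e ≤ a) (heb : e ≤ b)
    (hθ₀ : 0 ≤ θ) (hθ₁ : θ ≤ 1) : e ≤ a ^ (1 - θ) * b ^ θ :=
  have ha : 0 ≤ a := he.trans hea
  calc e = e ^ (1 - θ) * e ^ θ := by
        rw [← Real.rpow_add' he (by norm_num), sub_add_cancel, Real.rpow_one]
    _ ≤ a ^ (1 - θ) * b ^ θ := by gcongr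

lemma norm_div_norm_smul_sub_le {E : Type*} [NormedAddCommGroup E] [NormedSpace ℝ E] (z w : E) :
    ‖(‖w‖ / ‖z‖) • z - w‖ ≤ 2 * ‖z - w‖ := by
  have h : ‖(‖w‖ / ‖z‖) • z - z‖ ≤ ‖z - w‖ := by
    rcases eq_or_ne z 0 with rfl | hz
    · simp
    have hz' : ‖z‖ ≠ 0 := norm_ne_zero_iff.2 hz
    calc ‖(‖w‖ / ‖z‖) • z - z‖ = ‖(‖w‖ / ‖z‖ - 1) • z‖ := by rw [sub_smul, one_smul]
      _ = |‖w‖ - ‖z‖| := by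
        have hmul : (‖w‖ / ‖z‖ - 1) * ‖z‖ = ‖w‖ - ‖z‖ := by field_simp
        rw [norm_smul, Real.norm_eq_abs, ← hmul, abs_mul, abs_norm]
      _ ≤ ‖z - w‖ := by rw [abs_sub_comm]; exact abs_norm_sub_norm_le z w
  calc ‖(‖w‖ / ‖z‖) • z - w‖ ≤ ‖(‖w‖ / ‖z‖) • z - z‖ + ‖z - w‖ :=
        norm_sub_le_norm_sub_add_norm_sub _ _ _
    _ ≤ 2 * ‖z - w‖ := by linarith

lemma norm_div_norm_smul_of_norm_le {E : Type*} [NormedAddCommGroup E] [NormedSpace ℝ E]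
    {z w : E} (hwz : ‖w‖ ≤ ‖z‖) : ‖(‖w‖ / ‖z‖) • z‖ = ‖w‖ := by
  rcases eq_or_ne ‖z‖ 0 with hz | hz
  · simp [hz, le_antisymm (hz ▸ hwz) (norm_nonneg w)]
  · rw [norm_smul, Real.norm_of_nonneg (by positivity), div_mul_cancel₀ _ hz]

lemma Fp_eq_rpow_smul (p : ℝ) (z : ℂ) : Fp p z = ‖z‖ ^ (p - 2) • z := by
  rw [Fp, Complex.real_smul, mul_comm]
  split_ifs with h <;> simp [h]

lemma norm_Fp {p : ℝ} (hp : p ≠ 1) (z : ℂ) : ‖Fp p z‖ = ‖z‖ ^ (p - 1) := by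
  rcases eq_or_ne z 0 with rfl | hz
  · simp [Fp, Real.zero_rpow (sub_ne_zero.2 hp)]
  rw [Fp_eq_rpow_smul, norm_smul, Real.norm_of_nonneg (by positivity),
    ← Real.rpow_add_one (norm_ne_zero_iff.2 hz)]
  ring_nf

lemma Fp_smul {p : ℝ} (hp : p ≠ 1) {c : ℝ} (hc : 0 ≤ c) (z : ℂ) :
    Fp p (c • z) = c ^ (p - 1) • Fp p z := by
  rcases hc.eq_or_lt with rfl | hc
  · simp [Fp, Real.zero_rpow (sub_ne_zero.2 hp)]
  rw [Fp_eq_rpow_smul, Fp_eq_rpow_smul, norm_smul, Real.norm_of_nonneg hc.le,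
    Real.mul_rpow hc.le (norm_nonneg z), smul_smul, smul_smul, mul_assoc, mul_comm _ c,
    ← mul_assoc, ← Real.rpow_add_one hc.ne']
  ring_nf

lemma Fp_sub_Fp_of_norm_eq (p : ℝ) {z w : ℂ} (h : ‖z‖ = ‖w‖) :
    Fp p z - Fp p w = ‖w‖ ^ (p - 2) • (z - w) := by
  rw [Fp_eq_rpow_smul, Fp_eq_rpow_smul, h, smul_sub]

lemma norm_Fp_sub_Fp_le {p : ℝ} (hp : 1 < p) {z w : ℂ} (hwz : ‖w‖ ≤ ‖z‖) :
    ‖Fp p z - Fp p w‖ ≤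
      (‖z‖ ^ (p - 1) - ‖w‖ ^ (p - 1)) + ‖w‖ ^ (p - 2) * ‖(‖w‖ / ‖z‖) • z - w‖ := by
  set u := (‖w‖ / ‖z‖) • z
  have hu : ‖u‖ = ‖w‖ := norm_div_norm_smul_of_norm_le hwz
  have radial : ‖Fp p z - Fp p u‖ = ‖z‖ ^ (p - 1) - ‖w‖ ^ (p - 1) := by
    have hray : SameRay ℝ (Fp p z) (Fp p u) := by
      rw [Fp_smul hp.ne' (by positivity)]
      exact SameRay.sameRay_nonneg_smul_right _ (by positivity)
    rw [hray.norm_sub, norm_Fp hp.ne', norm_Fp hp.ne', hu, abs_of_nonneg]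
    exact sub_nonneg.2 (Real.rpow_le_rpow (norm_nonneg w) hwz (by linarith))
  have spherical : ‖Fp p u - Fp p w‖ = ‖w‖ ^ (p - 2) * ‖u - w‖ := by
    rw [Fp_sub_Fp_of_norm_eq p hu, norm_smul, Real.norm_of_nonneg (by positivity)]
  calc ‖Fp p z - Fp p w‖ ≤ ‖Fp p z - Fp p u‖ + ‖Fp p u - Fp p w‖ :=
        norm_sub_le_norm_sub_add_norm_sub _ _ _
    _ = _ := by rw [radial, spherical]

lemma norm_Fp_sub_Fp_le_of_le_two {p : ℝ} (hp : 1 < p) (hp2 : p ≤ 2) (z w : ℂ) :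
    ‖Fp p z - Fp p w‖ ≤ 3 * ‖z - w‖ ^ (p - 1) := by
  wlog hwz : ‖w‖ ≤ ‖z‖ generalizing z w
  · rw [norm_sub_rev, norm_sub_rev z]
    exact this w z (le_of_not_ge hwz)
  set d := ‖z - w‖
  set e := ‖(‖w‖ / ‖z‖) • z - w‖
  have radial : ‖z‖ ^ (p - 1) - ‖w‖ ^ (p - 1) ≤ d ^ (p - 1) := by
    have hsub := Real.rpow_add_le_add_rpow (sub_nonneg.2 hwz) (norm_nonneg w) (by linarith)
      (by linarith : p - 1 ≤ 1)
    rw [sub_add_cancel] at hsub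
    have hmono := Real.rpow_le_rpow (sub_nonneg.2 hwz) (norm_sub_norm_le z w)
      (by linarith : 0 ≤ p - 1)
    linarith
  have spherical : ‖w‖ ^ (p - 2) * e ≤ 2 * d ^ (p - 1) := by
    rcases (norm_nonneg w).eq_or_lt with hw | hw
    · simp [e, norm_eq_zero.1 hw.symm]; positivity
    have he : e ≤ (2 * ‖w‖) ^ (1 - (p - 1)) * (2 * d) ^ (p - 1) := by
      refine le_rpow_mul_rpow_of_le_of_le (norm_nonneg _) ?_ (norm_div_norm_smul_sub_le z w)
        (by linarith) (by linarith)
      linarith [norm_sub_le ((‖w‖ / ‖z‖) • z) w, norm_div_norm_smul_of_norm_le hwz]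
    have hw1 : ‖w‖ ^ (p - 2) * ‖w‖ ^ (1 - (p - 1)) = 1 := by
      rw [← Real.rpow_add hw]; ring_nf; exact Real.rpow_zero _
    have h21 : (2 : ℝ) ^ (1 - (p - 1)) * 2 ^ (p - 1) = 2 := by
      rw [← Real.rpow_add two_pos]; ring_nf; exact Real.rpow_one _
    calc ‖w‖ ^ (p - 2) * e
        ≤ ‖w‖ ^ (p - 2) * ((2 * ‖w‖) ^ (1 - (p - 1)) * (2 * d) ^ (p - 1)) := by gcongr
      _ = 2 * d ^ (p - 1) := by
          rw [Real.mul_rpow zero_le_two hw.le, Real.mul_rpow zero_le_two (norm_nonneg _)]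
          linear_combination
            (2 ^ (1 - (p - 1)) * 2 ^ (p - 1) * d ^ (p - 1)) * hw1 + d ^ (p - 1) * h21
  linarith [norm_Fp_sub_Fp_le hp hwz]

lemma norm_Fp_sub_Fp_le_of_two_le {p : ℝ} (hp2 : 2 ≤ p) (z w : ℂ) :
    ‖Fp p z - Fp p w‖ ≤ (p + 1) * (‖z‖ + ‖w‖) ^ (p - 2) * ‖z - w‖ := by
  wlog hwz : ‖w‖ ≤ ‖z‖ generalizing z w
  · rw [norm_sub_rev, norm_sub_rev z, add_comm ‖z‖]
    exact this w z (le_of_not_ge hwz)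
  set d := ‖z - w‖
  set M := (‖z‖ + ‖w‖) ^ (p - 2)
  have hM : ∀ t, 0 ≤ t → t ≤ ‖z‖ + ‖w‖ → t ^ (p - 2) ≤ M := fun t ht htM =>
    Real.rpow_le_rpow ht htM (by linarith)
  have radial : ‖z‖ ^ (p - 1) - ‖w‖ ^ (p - 1) ≤ (p - 1) * M * d :=
    calc ‖z‖ ^ (p - 1) - ‖w‖ ^ (p - 1) ≤ (p - 1) * ‖z‖ ^ (p - 1 - 1) * (‖z‖ - ‖w‖) :=
          rpow_sub_rpow_le_mul_sub (by linarith) (norm_nonneg w) hwz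
      _ ≤ (p - 1) * M * d := by
          rw [sub_sub, one_add_one_eq_two]
          have hz := hM _ (norm_nonneg z) (le_add_of_nonneg_right (norm_nonneg w))
          have hp1 : 0 ≤ p - 1 := by linarith
          gcongr
          exact norm_sub_norm_le z w
  have spherical : ‖w‖ ^ (p - 2) * ‖(‖w‖ / ‖z‖) • z - w‖ ≤ 2 * M * d :=
    calc ‖w‖ ^ (p - 2) * ‖(‖w‖ / ‖z‖) • z - w‖ ≤ M * (2 * d) := by
          gcongr
          · exact hM _ (norm_nonneg w) (le_add_of_nonneg_left (norm_nonneg z))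
          · exact norm_div_norm_smul_sub_le z w
      _ = 2 * M * d := by ring
  linarith [norm_Fp_sub_Fp_le (by linarith : 1 < p) hwz]

section Lp

variable {α : Type*} [MeasurableSpace α] {μ : Measure α}

lemma eLpNorm_norm_rpow_ofReal_div {F : Type*} [NormedAddCommGroup F] (f : α → F) (p : ℝ)
    {a : ℝ} (ha : 0 < a) :
    eLpNorm (fun x => ‖f x‖ ^ a) (ENNReal.ofReal (p / a)) μ =
      eLpNorm f (ENNReal.ofReal p) μ ^ a := by
  rw [eLpNorm_norm_rpow f ha, ← ENNReal.ofReal_mul' ha.le, div_mul_cancel₀ p ha.ne']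

lemma eLpNorm_Fp_comp_sub_le_of_le_two {p : ℝ} (hp : 1 < p) (hp2 : p ≤ 2) (g f : α → ℂ) :
    eLpNorm (Fp p ∘ g - Fp p ∘ f) (ENNReal.ofReal (p / (p - 1))) μ ≤
      3 * eLpNorm (g - f) (ENNReal.ofReal p) μ ^ (p - 1) :=
  calc eLpNorm (Fp p ∘ g - Fp p ∘ f) (ENNReal.ofReal (p / (p - 1))) μ
      ≤ eLpNorm ((3 : ℝ) • fun x => ‖(g - f) x‖ ^ (p - 1)) (ENNReal.ofReal (p / (p - 1))) μ :=
        eLpNorm_mono_real fun x => norm_Fp_sub_Fp_le_of_le_two hp hp2 (g x) (f x)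
    _ = 3 * eLpNorm (g - f) (ENNReal.ofReal p) μ ^ (p - 1) := by
        rw [eLpNorm_const_smul, eLpNorm_norm_rpow_ofReal_div _ _ (by linarith),
          Real.enorm_eq_ofReal zero_le_three, ENNReal.ofReal_ofNat]

lemma holderTriple_ofReal_div {p : ℝ} (hp2 : 2 < p) :
    ENNReal.HolderTriple (ENNReal.ofReal (p / (p - 2))) (ENNReal.ofReal p)
      (ENNReal.ofReal (p / (p - 1))) where
  inv_add_inv_eq_inv := by
    have hp : 0 < p := by linarith
    rw [← ENNReal.ofReal_inv_of_pos (by positivity), ← ENNReal.ofReal_inv_of_pos hp,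
      ← ENNReal.ofReal_inv_of_pos (div_pos hp (by linarith)), ← ENNReal.ofReal_add
        (by positivity) (by positivity)]
    congr 1
    field_simp
    ring

lemma eLpNorm_Fp_comp_sub_le_of_two_lt {p : ℝ} (hp2 : 2 < p) {g f : α → ℂ}
    (hg : AEStronglyMeasurable g μ) (hf : AEStronglyMeasurable f μ) :
    eLpNorm (Fp p ∘ g - Fp p ∘ f) (ENNReal.ofReal (p / (p - 1))) μ ≤
      ENNReal.ofReal (p + 1) *
        (eLpNorm g (ENNReal.ofReal p) μ + eLpNorm f (ENNReal.ofReal p) μ) ^ (p - 2) *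
          eLpNorm (g - f) (ENNReal.ofReal p) μ := by
  have := holderTriple_ofReal_div hp2
  set ψ : α → ℝ := fun x => ‖g x‖ + ‖f x‖
  set φ : α → ℝ := (p + 1) • fun x => ‖ψ x‖ ^ (p - 2)
  have hψ : eLpNorm ψ (ENNReal.ofReal p) μ ≤
      eLpNorm g (ENNReal.ofReal p) μ + eLpNorm f (ENNReal.ofReal p) μ := by
    have h := eLpNorm_add_le hg.norm hf.norm (ENNReal.one_le_ofReal.2 (by linarith))
    rwa [eLpNorm_norm, eLpNorm_norm] at h
  have hφ : AEStronglyMeasurable φ μ := by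
    simp only [φ, ψ]
    fun_prop (disch := linarith)
  calc eLpNorm (Fp p ∘ g - Fp p ∘ f) (ENNReal.ofReal (p / (p - 1))) μ
      ≤ eLpNorm (φ • (g - f)) (ENNReal.ofReal (p / (p - 1))) μ := by
        refine eLpNorm_mono fun x => ?_
        have hφx : 0 ≤ φ x := mul_nonneg (by linarith) (by positivity)
        calc ‖Fp p (g x) - Fp p (f x)‖ ≤ (p + 1) * ‖ψ x‖ ^ (p - 2) * ‖g x - f x‖ := by
              rw [Real.norm_of_nonneg (by positivity)]
              exact norm_Fp_sub_Fp_le_of_two_le hp2.le _ _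
          _ = ‖(φ • (g - f)) x‖ := by
              rw [Pi.smul_apply', norm_smul, Real.norm_of_nonneg hφx]
              rfl
    _ ≤ eLpNorm φ (ENNReal.ofReal (p / (p - 2))) μ * eLpNorm (g - f) (ENNReal.ofReal p) μ :=
        eLpNorm_smul_le_mul_eLpNorm (hg.sub hf) hφ
    _ = ENNReal.ofReal (p + 1) * eLpNorm ψ (ENNReal.ofReal p) μ ^ (p - 2) *
          eLpNorm (g - f) (ENNReal.ofReal p) μ := by
        rw [eLpNorm_const_smul, eLpNorm_norm_rpow_ofReal_div _ _ (by linarith),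
          Real.enorm_eq_ofReal (by linarith)]
    _ ≤ _ := by gcongr

end Lp

section Tendsto

variable {α ι : Type*} [MeasurableSpace α] {μ : Measure α} {l : Filter ι} {p : ℝ} {f : α → ℂ}
  {g : ι → α → ℂ}

lemma tendsto_eLpNorm_Fp_comp_sub_of_le_two (hp : 1 < p) (hp2 : p ≤ 2)
    (hconv : Tendsto (fun i => eLpNorm (g i - f) (ENNReal.ofReal p) μ) l (nhds 0)) :
    Tendsto (fun i => eLpNorm (Fp p ∘ g i - Fp p ∘ f) (ENNReal.ofReal (p / (p - 1))) μ) l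
      (nhds 0) := by
  have hbound : Tendsto (fun i => 3 * eLpNorm (g i - f) (ENNReal.ofReal p) μ ^ (p - 1)) l
      (nhds 0) := by
    simpa [ENNReal.zero_rpow_of_pos (by linarith : 0 < p - 1)] using
      ENNReal.Tendsto.const_mul (hconv.ennrpow_const (p - 1)) (Or.inr ENNReal.ofNat_ne_top)
  exact tendsto_of_tendsto_of_tendsto_of_le_of_le tendsto_const_nhds hbound (fun _ => zero_le)
    fun i => eLpNorm_Fp_comp_sub_le_of_le_two hp hp2 (g i) f

lemma tendsto_eLpNorm_Fp_comp_sub_of_two_lt (hp2 : 2 < p) (hf : MemLp f (ENNReal.ofReal p) μ)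
    (hg : ∀ i, AEStronglyMeasurable (g i) μ)
    (hconv : Tendsto (fun i => eLpNorm (g i - f) (ENNReal.ofReal p) μ) l (nhds 0)) :
    Tendsto (fun i => eLpNorm (Fp p ∘ g i - Fp p ∘ f) (ENNReal.ofReal (p / (p - 1))) μ) l
      (nhds 0) := by
  set u := fun i => eLpNorm (g i - f) (ENNReal.ofReal p) μ
  set A := eLpNorm f (ENNReal.ofReal p) μ
  have hA : A ≠ ⊤ := hf.eLpNorm_ne_top
  have hbound : ∀ i, eLpNorm (Fp p ∘ g i - Fp p ∘ f) (ENNReal.ofReal (p / (p - 1))) μ ≤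
      ENNReal.ofReal (p + 1) * (u i + A + A) ^ (p - 2) * u i := fun i => by
    have hgi : eLpNorm (g i) (ENNReal.ofReal p) μ ≤ u i + A := by
      simpa using eLpNorm_add_le ((hg i).sub hf.1) hf.1 (ENNReal.one_le_ofReal.2 (by linarith))
    refine (eLpNorm_Fp_comp_sub_le_of_two_lt hp2 (hg i) hf.1).trans ?_
    gcongr
  have hlim : Tendsto (fun i => ENNReal.ofReal (p + 1) * (u i + A + A) ^ (p - 2) * u i) l
      (nhds 0) := by
    have hfactor : Tendsto (fun i => ENNReal.ofReal (p + 1) * (u i + A + A) ^ (p - 2)) l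
        (nhds (ENNReal.ofReal (p + 1) * (0 + A + A) ^ (p - 2))) :=
      ENNReal.Tendsto.const_mul ((hconv.add_const A).add_const A |>.ennrpow_const _)
        (Or.inr ENNReal.ofReal_ne_top)
    simpa using ENNReal.Tendsto.mul hfactor (Or.inr ENNReal.zero_ne_top) hconv
      (Or.inr (by finiteness))
  exact tendsto_of_tendsto_of_tendsto_of_le_of_le tendsto_const_nhds hlim (fun _ => zero_le)
    hbound

end Tendsto

theorem Fp_continuous_Lp_to_Lp'_general (p p' : ℝ) (hp : 1 < p) (hp' : p' = p / (p - 1))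
    {Ω : Type*} [MeasurableSpace Ω] (μ : Measure Ω)
    (f : Ω → ℂ) (fn : ℕ → Ω → ℂ)
    (hf : MemLp f (ENNReal.ofReal p) μ)
    (hfn : ∀ n, MemLp (fn n) (ENNReal.ofReal p) μ)
    (hconv : Tendsto (fun n => eLpNorm (fn n - f) (ENNReal.ofReal p) μ) atTop (nhds 0)) :
    Tendsto (fun n => eLpNorm ((fun x => Fp p (fn n x)) - fun x => Fp p (f x))
      (ENNReal.ofReal p') μ) atTop (nhds 0) := by
  subst hp'
  rcases le_or_gt p 2 with hp2 | hp2
  · exact tendsto_eLpNorm_Fp_comp_sub_of_le_two hp hp2 hconv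
  · exact tendsto_eLpNorm_Fp_comp_sub_of_two_lt hp2 hf (fun n => (hfn n).1) hconv

theorem Fp_continuous_Lp_to_Lp' (p p' : ℝ) (hp : 1 < p) (hp' : p' = p / (p - 1))
    {Ω : Type*} [MeasurableSpace Ω] (μ : Measure Ω) [SigmaFinite μ]
    (f : Ω → ℂ) (fn : ℕ → Ω → ℂ)
    (hf : MemLp f (ENNReal.ofReal p) μ)
    (hfn : ∀ n, MemLp (fn n) (ENNReal.ofReal p) μ)
    (hconv : Tendsto (fun n => eLpNorm (fn n - f) (ENNReal.ofReal p) μ) atTop (nhds 0)) :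
    Tendsto (fun n => eLpNorm ((fun x => Fp p (fn n x)) - fun x => Fp p (f x))
      (ENNReal.ofReal p') μ) atTop (nhds 0) :=
  Fp_continuous_Lp_to_Lp'_general p p' hp hp' μ f fn hf hfn hconv
end
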